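/- arXiv:2311.04409 — 6 statements merged into one kernel-verified Lean document; each statement's English description precedes it below -/
import Mathlib

section
/- Let f map a partial order Π on [n] to the set f(Π) = {e_j - e_i : i <_Π j} ⊂ ℝ^n. Then f is a bijection between partial orders on [n] and subsets P of the type-A root system A_n = {e_i - e_j : 1 ≤ i < j ≤ n} ∪ {e_j - e_i : 1 ≤ i < j ≤ n} satisfying: (1) α ∈ P implies -α ∉ P; (2) P is closed under positive linear combinations, i.e., any element of A_n that is a positive linear combination of elements of P lies in P. -/
open Finset Pointwise

noncomputable section
attribute [local instance] Classical.propDecidable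

/-- The `i`-th standard unit vector in `ℝ^n`. -/
def ee (n : ℕ) (i : Fin n) : Fin n → ℝ := fun j => if j = i then 1 else 0

/-- Standard inner product on `ℝ^n`. -/
def dot {n : ℕ} (a x : Fin n → ℝ) : ℝ := ∑ i, a i * x i

/-- The type-B root system `B_n`. -/
def Bn (n : ℕ) : Set (Fin n → ℝ) :=
  {α | (∃ i : Fin n, α = ee n i ∨ α = -ee n i) ∨
       (∃ i j : Fin n, i < j ∧ (α = ee n i + ee n j ∨ α = -ee n i - ee n j ∨
          α = ee n i - ee n j ∨ α = -ee n i + ee n j))}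

/-- The set of positive linear combinations of elements of `S`. -/
def PLC {n : ℕ} (S : Set (Fin n → ℝ)) : Set (Fin n → ℝ) :=
  {β | ∃ (m : ℕ) (c : Fin m → ℝ) (v : Fin m → (Fin n → ℝ)),
     (∀ k, 0 < c k) ∧ (∀ k, v k ∈ S) ∧ β = ∑ k, c k • v k}

/-- A signed poset on `[n]`: a subset of `B_n` with antisymmetry, closed under
positive linear combinations within `B_n`. -/
def IsSignedPoset {n : ℕ} (P : Set (Fin n → ℝ)) : Prop :=
  P ⊆ Bn n ∧ (∀ α ∈ P, -α ∉ P) ∧ (∀ β ∈ Bn n, β ∈ PLC P → β ∈ P)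

/-- The signed order cone `K_P`. -/
def orderCone {n : ℕ} (P : Set (Fin n → ℝ)) : Set (Fin n → ℝ) :=
  {x | ∀ α ∈ P, 0 ≤ dot α x}

/-- The signed order polytope `O_P = K_P ∩ [-1,1]^n`. -/
def orderPolytope {n : ℕ} (P : Set (Fin n → ℝ)) : Set (Fin n → ℝ) :=
  {x | (∀ α ∈ P, 0 ≤ dot α x) ∧ ∀ i, -1 ≤ x i ∧ x i ≤ 1}

/-- The type-A root system `A_n ⊂ ℝ^n`. -/
def An (n : ℕ) : Set (Fin n → ℝ) := {α | ∃ i j : Fin n, i ≠ j ∧ α = ee n j - ee n i}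

/-!
A partial order `r` is recovered from its roots as `r i j ↔ i = j ∨ e_j - e_i ∈ f(r)`, and for
an admissible `P` the relation `i = j ∨ e_j - e_i ∈ P` is a partial order: transitivity is
closure of `P` under the sum `(e_j - e_i) + (e_k - e_j)`, antisymmetry is `α ∈ P → -α ∉ P`.
Conversely, `f(r)` is closed under positive linear combinations because every root `e_b - e_a`
of `r` pairs nonnegatively with the indicator vector of the up-set `{a | i ≤_r a}`, while
`e_j - e_i` pairs with it to `-1` unless `i ≤_r j`.
-/

variable {n : ℕ}

def posetRoots (n : ℕ) (r : Fin n → Fin n → Prop) : Set (Fin n → ℝ) :=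
  {α | ∃ i j : Fin n, r i j ∧ i ≠ j ∧ α = ee n j - ee n i}

def relOfRoots (P : Set (Fin n → ℝ)) (i j : Fin n) : Prop :=
  i = j ∨ ee n j - ee n i ∈ P

lemma ee_sub_ee_inj {i j i' j' : Fin n} (hij : i ≠ j)
    (h : ee n j - ee n i = ee n j' - ee n i') : i = i' ∧ j = j' := by
  have hi := congrFun h i
  have hj := congrFun h j
  simp only [Pi.sub_apply, ee, if_neg hij, if_neg hij.symm, if_true] at hi hj
  constructor
  · by_contra hc
    rw [if_neg hc] at hi
    split_ifs at hi <;> norm_num at hi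
  · by_contra hc
    rw [if_neg hc] at hj
    split_ifs at hj <;> norm_num at hj

lemma mem_posetRoots_iff {r : Fin n → Fin n → Prop} {i j : Fin n} (hij : i ≠ j) :
    ee n j - ee n i ∈ posetRoots n r ↔ r i j := by
  constructor
  · rintro ⟨i', j', hr, -, h⟩
    obtain ⟨rfl, rfl⟩ := ee_sub_ee_inj hij h
    exact hr
  · exact fun hr => ⟨i, j, hr, hij, rfl⟩

lemma posetRoots_subset_An (r : Fin n → Fin n → Prop) : posetRoots n r ⊆ An n := by
  rintro α ⟨i, j, -, hij, rfl⟩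
  exact ⟨i, j, hij, rfl⟩

lemma neg_not_mem_posetRoots {r : Fin n → Fin n → Prop} [Std.Antisymm r] :
    ∀ α ∈ posetRoots n r, -α ∉ posetRoots n r := by
  rintro α ⟨i, j, hr, hij, rfl⟩ hneg
  rw [neg_sub, mem_posetRoots_iff hij.symm] at hneg
  exact hij (antisymm hr hneg)

lemma dot_ee_sub_ee (i j : Fin n) (x : Fin n → ℝ) : dot (ee n j - ee n i) x = x j - x i := by
  simp [dot, ee, sub_mul, Finset.sum_sub_distrib]

lemma dot_sum_smul {m : ℕ} (c : Fin m → ℝ) (v : Fin m → Fin n → ℝ) (x : Fin n → ℝ) :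
    dot (∑ k, c k • v k) x = ∑ k, c k * dot (v k) x := by
  simp only [dot, Finset.sum_apply, Pi.smul_apply, smul_eq_mul, Finset.mul_sum, Finset.sum_mul]
  rw [Finset.sum_comm]
  simp only [mul_assoc]

lemma orderCone_subset_orderCone_PLC (S : Set (Fin n → ℝ)) : orderCone S ⊆ orderCone (PLC S) := by
  rintro x hx _ ⟨m, c, v, hc, hv, rfl⟩
  rw [dot_sum_smul]
  exact Finset.sum_nonneg fun k _ => mul_nonneg (hc k).le (hx _ (hv k))

lemma add_mem_PLC {S : Set (Fin n → ℝ)} {α β : Fin n → ℝ} (hα : α ∈ S) (hβ : β ∈ S) :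
    α + β ∈ PLC S := by
  refine ⟨2, ![1, 1], ![α, β], ?_, ?_, ?_⟩
  · intro k; fin_cases k <;> simp
  · intro k; fin_cases k <;> simpa
  · simp [Fin.sum_univ_two]

lemma upSetIndicator_mem_orderCone (r : Fin n → Fin n → Prop) [IsTrans (Fin n) r] (i : Fin n) :
    (fun a => if r i a then (1 : ℝ) else 0) ∈ orderCone (posetRoots n r) := by
  rintro _ ⟨a, b, hab, -, rfl⟩
  rw [dot_ee_sub_ee]
  by_cases hia : r i a
  · simp [hia, _root_.trans hia hab]
  · simp only [hia, if_false]
    split_ifs <;> norm_num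

lemma rel_of_mem_PLC_posetRoots {r : Fin n → Fin n → Prop} [IsPreorder (Fin n) r] {i j : Fin n}
    (h : ee n j - ee n i ∈ PLC (posetRoots n r)) : r i j := by
  have hdot := orderCone_subset_orderCone_PLC _ (upSetIndicator_mem_orderCone r i) _ h
  rw [dot_ee_sub_ee] at hdot
  by_contra hij
  norm_num [hij, refl_of r i] at hdot

lemma relOfRoots_posetRoots (r : Fin n → Fin n → Prop) [Std.Refl r] :
    relOfRoots (posetRoots n r) = r := by
  funext i j
  apply propext
  by_cases hij : i = j
  · subst hij
    exact ⟨fun _ => refl_of r i, fun _ => Or.inl rfl⟩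
  · simp [relOfRoots, hij, mem_posetRoots_iff hij]

lemma posetRoots_relOfRoots {P : Set (Fin n → ℝ)} (hP : P ⊆ An n) :
    posetRoots n (relOfRoots P) = P := by
  ext α
  constructor
  · rintro ⟨i, j, hr | hr, hij, rfl⟩
    · exact absurd hr hij
    · exact hr
  · intro hα
    obtain ⟨i, j, hij, rfl⟩ := hP hα
    exact ⟨i, j, Or.inr hα, hij, rfl⟩

lemma isPartialOrder_relOfRoots {P : Set (Fin n → ℝ)} (hAnti : ∀ α ∈ P, -α ∉ P)
    (hClosed : ∀ β ∈ An n, β ∈ PLC P → β ∈ P) : IsPartialOrder (Fin n) (relOfRoots P) where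
  refl _ := Or.inl rfl
  trans i j k := by
    rintro (rfl | hij) (rfl | hjk)
    · exact Or.inl rfl
    · exact Or.inr hjk
    · exact Or.inr hij
    by_cases hik : i = k
    · subst hik
      exact absurd (by rwa [neg_sub]) (hAnti _ hij)
    · refine Or.inr (hClosed _ ⟨i, k, hik, rfl⟩ ?_)
      simpa using add_mem_PLC hjk hij
  antisymm i j := by
    rintro (rfl | hij) (h | hji)
    · rfl
    · rfl
    · exact h.symm
    · exact absurd (by rwa [neg_sub]) (hAnti _ hij)

/-- the map `Π ↦ {e_j - e_i : i <_Π j}` is a bijection between partial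
orders on `[n]` and subsets `P ⊆ A_n` with antisymmetry and positive linear closure. -/
theorem stmt0 (n : ℕ) :
    Set.BijOn
      (fun r : Fin n → Fin n → Prop =>
        {α : Fin n → ℝ | ∃ i j : Fin n, r i j ∧ i ≠ j ∧ α = ee n j - ee n i})
      {r | IsPartialOrder (Fin n) r}
      {P | P ⊆ An n ∧ (∀ α ∈ P, -α ∉ P) ∧ ∀ β ∈ An n, β ∈ PLC P → β ∈ P} := by
  change Set.BijOn (posetRoots n) _ _
  refine ⟨fun r (hr : IsPartialOrder _ r) => ?_, fun r (hr : IsPartialOrder _ r) r'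
    (hr' : IsPartialOrder _ r') h => ?_, fun P ⟨hPA, hAnti, hClosed⟩ => ?_⟩
  · refine ⟨posetRoots_subset_An r, neg_not_mem_posetRoots, ?_⟩
    rintro _ ⟨i, j, hij, rfl⟩ hPLC
    exact (mem_posetRoots_iff hij).2 (rel_of_mem_PLC_posetRoots hPLC)
  · rw [← relOfRoots_posetRoots r, ← relOfRoots_posetRoots r', h]
  · exact ⟨relOfRoots P, isPartialOrder_relOfRoots hAnti hClosed, posetRoots_relOfRoots hPA⟩
end
end

section
/- For any signed poset P on [n], the signed order cone K_P = {x ∈ ℝ^n : ⟨α, x⟩ ≥ 0 for all α ∈ P} is full dimensional, i.e., K_P has nonempty interior in ℝ^n (equivalently, there exists x ∈ ℝ^n with ⟨α, x⟩ > 0 for all α ∈ P). -/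
open Finset Pointwise

noncomputable section
attribute [local instance] Classical.propDecidable

/-!
A signed poset `P` is finite, and `0` is not in its convex hull: otherwise `0 = ∑ wᵢ yᵢ` with
some `w₀ > 0`, so `-y₀` is a nonnegative combination of elements of `P`; as `-y₀ ∈ B_n`, closure
puts `-y₀` in `P`, against antisymmetry. Separating `0` from the compact convex hull of `P` by a
linear functional gives the required point `x`.
-/

lemma Bn_finite (n : ℕ) : (Bn n).Finite := by
  refine (Set.finite_iUnion fun i : Fin n => Set.finite_iUnion fun j : Fin n =>
    Set.toFinite ({ee n i, -ee n i, ee n i + ee n j, -ee n i - ee n j, ee n i - ee n j,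
      -ee n i + ee n j} : Set (Fin n → ℝ))).subset ?_
  rintro α (⟨i, h | h⟩ | ⟨i, j, -, h | h | h | h⟩) <;> simp only [Set.mem_iUnion]
  · exact ⟨i, i, by simp [h]⟩
  · exact ⟨i, i, by simp [h]⟩
  all_goals exact ⟨i, j, by simp [h]⟩

lemma neg_mem_Bn {n : ℕ} {α : Fin n → ℝ} (h : α ∈ Bn n) : -α ∈ Bn n := by
  rcases h with ⟨i, h | h⟩ | ⟨i, j, hij, h | h | h | h⟩
  · exact Or.inl ⟨i, Or.inr (by rw [h])⟩
  · exact Or.inl ⟨i, Or.inl (by rw [h, neg_neg])⟩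
  · exact Or.inr ⟨i, j, hij, Or.inr (Or.inl (by rw [h]; abel))⟩
  · exact Or.inr ⟨i, j, hij, Or.inl (by rw [h]; abel)⟩
  · exact Or.inr ⟨i, j, hij, Or.inr (Or.inr (Or.inr (by rw [h]; abel)))⟩
  · exact Or.inr ⟨i, j, hij, Or.inr (Or.inr (Or.inl (by rw [h]; abel)))⟩

lemma LinearMap.apply_eq_dot_ee {n : ℕ} (f : (Fin n → ℝ) →ₗ[ℝ] ℝ) (α : Fin n → ℝ) :
    f α = dot α (fun i => f (ee n i)) := by
  rw [f.pi_apply_eq_sum_univ α, dot]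
  congr! 3 with i
  funext j
  simp only [ee, eq_comm]

lemma sum_smul_mem_PLC {n : ℕ} {S : Set (Fin n → ℝ)} {ι : Type*} (t : Finset ι) (c : ι → ℝ)
    (v : ι → Fin n → ℝ) (hc : ∀ i ∈ t, 0 ≤ c i) (hv : ∀ i ∈ t, v i ∈ S) :
    ∑ i ∈ t, c i • v i ∈ PLC S := by
  set u := t.filter (fun i => 0 < c i)
  have hu : ∑ i ∈ u, c i • v i = ∑ i ∈ t, c i • v i :=
    Finset.sum_filter_of_ne fun i hi hne =>
      (hc i hi).lt_of_ne' fun h => hne (by rw [h, zero_smul])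
  have hmem (k : Fin u.card) := Finset.mem_filter.1 (u.equivFin.symm k).2
  refine ⟨u.card, fun k => c (u.equivFin.symm k), fun k => v (u.equivFin.symm k),
    fun k => (hmem k).2, fun k => hv _ (hmem k).1, ?_⟩
  rw [← hu, ← Finset.sum_coe_sort u]
  exact (Equiv.sum_comp u.equivFin.symm (fun i => c i • v i)).symm

lemma exists_neg_mem_PLC_of_zero_mem_convexHull {n : ℕ} {S : Set (Fin n → ℝ)}
    (h : (0 : Fin n → ℝ) ∈ convexHull ℝ S) : ∃ y ∈ S, -y ∈ PLC S := by
  obtain ⟨ι, _, w, z, hw0, hw1, hz, hwz⟩ := mem_convexHull_iff_exists_fintype.1 h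
  obtain ⟨i₀, -, hi₀⟩ := Finset.exists_ne_zero_of_sum_ne_zero (hw1 ▸ one_ne_zero)
  have hpos : 0 < w i₀ := (hw0 i₀).lt_of_ne' hi₀
  have hrest : ∑ i ∈ univ.erase i₀, w i • z i = -(w i₀ • z i₀) := by
    rw [eq_neg_iff_add_eq_zero, add_comm,
      Finset.add_sum_erase _ (fun i => w i • z i) (mem_univ i₀), hwz]
  have hneg : -z i₀ = ∑ i ∈ univ.erase i₀, (w i / w i₀) • z i := by
    simp_rw [div_eq_inv_mul, ← smul_smul, ← Finset.smul_sum, hrest, smul_neg, smul_smul,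
      inv_mul_cancel₀ hpos.ne', one_smul]
  refine ⟨z i₀, hz i₀, hneg ▸ ?_⟩
  exact sum_smul_mem_PLC _ _ _ (fun i _ => div_nonneg (hw0 i) hpos.le) (fun i _ => hz i)

lemma IsSignedPoset.zero_notMem_convexHull {n : ℕ} {P : Set (Fin n → ℝ)} (hP : IsSignedPoset P) :
    (0 : Fin n → ℝ) ∉ convexHull ℝ P := by
  obtain ⟨hPB, hanti, hclosed⟩ := hP
  intro h0
  obtain ⟨y, hy, hneg⟩ := exists_neg_mem_PLC_of_zero_mem_convexHull h0
  exact hanti y hy (hclosed _ (neg_mem_Bn (hPB hy)) hneg)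

lemma exists_dot_pos_of_zero_notMem_convexHull {n : ℕ} {S : Set (Fin n → ℝ)} (hS : S.Finite)
    (h0 : (0 : Fin n → ℝ) ∉ convexHull ℝ S) : ∃ x : Fin n → ℝ, ∀ α ∈ S, 0 < dot α x := by
  obtain ⟨f, u, hfu, hf⟩ := geometric_hahn_banach_point_closed (convex_convexHull ℝ S)
    (hS.isClosed_convexHull ℝ) h0
  refine ⟨fun i => f (ee n i), fun α hα => ?_⟩
  calc 0 < u := by simpa using hfu
    _ < f α := hf α (subset_convexHull ℝ S hα)
    _ = dot α (fun i => f (ee n i)) := f.toLinearMap.apply_eq_dot_ee α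

/-- the order cone of a signed poset is full dimensional. -/
theorem stmt3 {n : ℕ} (P : Set (Fin n → ℝ)) (hP : IsSignedPoset P) :
    ∃ x : Fin n → ℝ, ∀ α ∈ P, 0 < dot α x :=
  exists_dot_pos_of_zero_notMem_convexHull ((Bn_finite n).subset hP.1) hP.zero_notMem_convexHull
end
end

section
/- Let P be a signed poset on [n]. Then the signed order polytope O_P is described irredundantly by the inequalities: ⟨α, x⟩ ≥ 0 for α in the minimal representation minrep(P), x_i ≤ 1 for every positive maximal element i, and x_i ≥ -1 for every negative maximal element i. In particular, this set of inequalities defines O_P and no inequality among them may be removed. -/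
open Finset Pointwise

noncomputable section
attribute [local instance] Classical.propDecidable

/-- `S` generates `P` via positive linear combinations. -/
def GenBy {n : ℕ} (S P : Set (Fin n → ℝ)) : Prop := S ⊆ P ∧ ∀ β ∈ P, β ∈ PLC S

/-- `M` is the (unique) minimal representation of the signed poset `P`. -/
def IsMinrep {n : ℕ} (P M : Set (Fin n → ℝ)) : Prop :=
  GenBy M P ∧ ∀ S : Set (Fin n → ℝ), GenBy S P → M ⊆ S

/-- `i` is a positive maximal element of `P`. -/
def PMax {n : ℕ} (P : Set (Fin n → ℝ)) (i : Fin n) : Prop := ∀ α ∈ P, α i ≠ 0 → α i = 1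

/-- `i` is a negative maximal element of `P`. -/
def NMax {n : ℕ} (P : Set (Fin n → ℝ)) (i : Fin n) : Prop := ∀ α ∈ P, α i ≠ 0 → α i = -1

/-- The polyhedron cut out by `⟨α, x⟩ ≥ 0` for `α ∈ M`, `x_i ≤ 1` for `i ∈ Sp`,
and `x_i ≥ -1` for `i ∈ Sn`. -/
def polyOf {n : ℕ} (M : Set (Fin n → ℝ)) (Sp Sn : Set (Fin n)) : Set (Fin n → ℝ) :=
  {x | (∀ α ∈ M, 0 ≤ dot α x) ∧ (∀ i ∈ Sp, x i ≤ 1) ∧ (∀ i ∈ Sn, -1 ≤ x i)}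

/-!
Every relation of `P` is a positive combination of `minrep(P)`, so the inequalities of `M` already
cut out the cone `K_P`. The box inequalities propagate downwards: if `i` is not positive maximal,
some relation `-e_i` or `-e_i ± e_j` bounds `x_i` by `0` or by `±x_j`; following these relations
upwards ends at a maximal signed element, where the bound `1` is imposed, since a cycle would make
`0` a positive combination of relations, contradicting antisymmetry.

For irredundancy, dropping `x_i ≤ 1` admits `2 e_i`. An element `α₀` of `minrep(P)` is not a
positive combination of the others, so by Farkas' lemma some point satisfies all the other
inequalities and violates `⟨α₀, x⟩ ≥ 0`; scaled into the cube it lies in the larger polyhedron only.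
-/

section Farkas

variable {𝕜 V : Type*} [Field 𝕜] [LinearOrder 𝕜] [IsStrictOrderedRing 𝕜]
  [AddCommGroup V] [Module 𝕜 V]

/- Induction on the number of generators: if the functional `g` separating `b` from the cone
of the last `m` generators is negative on the first one `a`, project along `a` onto `ker g` and
separate there. -/
theorem exists_dual_separating_of_forall_sum_ne {m : ℕ} (v : Fin m → V) (b : V)
    (hb : ∀ c : Fin m → 𝕜, (∀ k, 0 ≤ c k) → ∑ k, c k • v k ≠ b) :
    ∃ f : Module.Dual 𝕜 V, (∀ k, 0 ≤ f (v k)) ∧ f b < 0 := by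
  induction m generalizing b with
  | zero =>
    have hb0 : b ≠ 0 := fun h => hb 0 (fun k => k.elim0) (by simp [h])
    obtain ⟨φ, hφ⟩ : ∃ φ : Module.Dual 𝕜 V, φ b ≠ 0 := by
      by_contra! h
      exact hb0 ((Module.forall_dual_apply_eq_zero_iff 𝕜 b).1 h)
    refine ⟨-(φ b)⁻¹ • φ, fun k => k.elim0, ?_⟩
    simp [hφ]
  | succ m ih =>
    set a := v 0
    obtain ⟨g, hg, hgb⟩ := ih (fun k => v k.succ) b fun c hc hsum =>
      hb (Fin.cons 0 c) (Fin.cases le_rfl hc) (by simpa [Fin.sum_univ_succ] using hsum)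
    by_cases hga : 0 ≤ g a
    · exact ⟨g, Fin.cases hga hg, hgb⟩
    push Not at hga
    let π : V →ₗ[𝕜] V := LinearMap.id - (g a)⁻¹ • g.smulRight a
    have hπ : ∀ x, x = π x + (g x / g a) • a := fun x => by
      simp [π, smul_smul, div_eq_inv_mul]
    have hπa : π a = 0 := by simp [π, smul_smul, hga.ne]
    obtain ⟨h, hh, hhb⟩ := ih (fun k => π (v k.succ)) (π b) fun c hc hsum => by
      set u := ∑ k, c k • v k.succ - b
      have hu : u = (g u / g a) • a := by
        simpa [u, map_sub, map_sum, hsum] using hπ u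
      have hgu : 0 < g u := by
        simp only [u, map_sub, map_sum, map_smul, smul_eq_mul]
        linarith [Finset.sum_nonneg fun k (_ : k ∈ Finset.univ) => mul_nonneg (hc k) (hg k)]
      refine hb (Fin.cons (-(g u / g a)) c) (Fin.cases ?coef_nonneg hc) ?sum_eq
      case coef_nonneg => exact (neg_pos.2 (div_neg_of_pos_of_neg hgu hga)).le
      case sum_eq =>
        rw [Fin.sum_univ_succ, Fin.cons_zero, neg_smul, ← hu]
        simp only [Fin.cons_succ, u]
        abel
    exact ⟨h ∘ₗ π, Fin.cases (by simp [a, hπa]) hh, hhb⟩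

end Farkas

namespace SignedPoset

variable {n : ℕ}

lemma ee_eq_single (i : Fin n) : ee n i = Pi.single i 1 := by
  ext j
  simp [ee, Pi.single_apply]

lemma dot_eq_dotProduct (a x : Fin n → ℝ) : dot a x = a ⬝ᵥ x := rfl

lemma zero_mem_PLC (S : Set (Fin n → ℝ)) : (0 : Fin n → ℝ) ∈ PLC S :=
  ⟨0, 0, 0, fun k => k.elim0, fun k => k.elim0, by simp⟩

lemma add_mem_PLC {S : Set (Fin n → ℝ)} {β γ : Fin n → ℝ} (hβ : β ∈ PLC S) (hγ : γ ∈ PLC S) :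
    β + γ ∈ PLC S := by
  obtain ⟨m₁, c₁, v₁, hc₁, hv₁, rfl⟩ := hβ
  obtain ⟨m₂, c₂, v₂, hc₂, hv₂, rfl⟩ := hγ
  refine ⟨m₁ + m₂, Fin.append c₁ c₂, Fin.append v₁ v₂, Fin.addCases ?_ ?_, Fin.addCases ?_ ?_,
    by simp [Fin.sum_univ_add]⟩ <;> simp [*]

lemma smul_mem_PLC {S : Set (Fin n → ℝ)} {β : Fin n → ℝ} (hβ : β ∈ PLC S) {c : ℝ} (hc : 0 ≤ c) :
    c • β ∈ PLC S := by
  rcases hc.eq_or_lt with rfl | hc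
  · simpa using zero_mem_PLC S
  obtain ⟨m, d, v, hd, hv, rfl⟩ := hβ
  exact ⟨m, c • d, v, fun k => mul_pos hc (hd k), hv, by simp [Finset.smul_sum, smul_smul]⟩

lemma sum_mem_PLC {S : Set (Fin n → ℝ)} {ι : Type*} (s : Finset ι) {f : ι → Fin n → ℝ}
    (hf : ∀ k ∈ s, f k ∈ PLC S) : ∑ k ∈ s, f k ∈ PLC S :=
  Finset.sum_induction f (· ∈ PLC S) (fun _ _ => add_mem_PLC) (zero_mem_PLC S) hf

lemma subset_PLC (S : Set (Fin n → ℝ)) : S ⊆ PLC S := fun α hα =>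
  ⟨1, 1, fun _ => α, fun _ => one_pos, fun _ => hα, by simp⟩

lemma PLC_subset_PLC {S T : Set (Fin n → ℝ)} (h : S ⊆ PLC T) : PLC S ⊆ PLC T := by
  rintro β ⟨m, c, v, hc, hv, rfl⟩
  exact sum_mem_PLC _ fun k _ => smul_mem_PLC (h (hv k)) (hc k).le

lemma dot_nonneg_of_mem_PLC {S : Set (Fin n → ℝ)} {β x : Fin n → ℝ} (hβ : β ∈ PLC S)
    (hS : ∀ α ∈ S, 0 ≤ dot α x) : 0 ≤ dot β x := by
  obtain ⟨m, c, v, hc, hv, rfl⟩ := hβ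
  simp only [dot_eq_dotProduct, sum_dotProduct, smul_dotProduct, smul_eq_mul] at hS ⊢
  exact Finset.sum_nonneg fun k _ => mul_nonneg (hc k).le (hS _ (hv k))

lemma exists_dot_separating_of_notMem_PLC {S : Set (Fin n → ℝ)} (hS : S.Finite)
    {β : Fin n → ℝ} (hβ : β ∉ PLC S) : ∃ y, (∀ α ∈ S, 0 ≤ dot α y) ∧ dot β y < 0 := by
  obtain ⟨m, v, rfl⟩ := hS.fin_embedding
  obtain ⟨f, hf, hfβ⟩ := exists_dual_separating_of_forall_sum_ne (𝕜 := ℝ) v β fun c hc hsum =>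
    hβ (hsum ▸ sum_mem_PLC _ fun k _ => smul_mem_PLC (subset_PLC _ (Set.mem_range_self k)) (hc k))
  have hf_dot : ∀ α, f α = dot α (fun i => f fun j => if i = j then 1 else 0) := fun α => by
    rw [f.pi_apply_eq_sum_univ α, dot]
    simp only [smul_eq_mul]
  refine ⟨_, ?_, (hf_dot β) ▸ hfβ⟩
  rintro _ ⟨k, rfl⟩
  exact hf_dot (v k) ▸ hf k

lemma neg_mem_Bn {α : Fin n → ℝ} (h : α ∈ Bn n) : -α ∈ Bn n := by
  rcases h with ⟨i, rfl | rfl⟩ | ⟨i, j, hij, rfl | rfl | rfl | rfl⟩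
  · exact Or.inl ⟨i, Or.inr rfl⟩
  · exact Or.inl ⟨i, Or.inl (neg_neg _)⟩
  · exact Or.inr ⟨i, j, hij, Or.inr (Or.inl (by abel))⟩
  · exact Or.inr ⟨i, j, hij, Or.inl (by abel)⟩
  · exact Or.inr ⟨i, j, hij, Or.inr (Or.inr (Or.inr (by abel)))⟩
  · exact Or.inr ⟨i, j, hij, Or.inr (Or.inr (Or.inl (by abel)))⟩

lemma neg_notMem_PLC {P : Set (Fin n → ℝ)} (hP : IsSignedPoset P) {α : Fin n → ℝ}
    (hα : α ∈ P) : -α ∉ PLC P := fun h =>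
  hP.2.1 α hα (hP.2.2 _ (neg_mem_Bn (hP.1 hα)) h)

/- A signed index `(i, s)` stands for `+i` (`s = true`) or `-i` (`s = false`) in `±[n]`. -/
def sgn (s : Bool) : ℝ := if s then 1 else -1

def signedUnit (a : Fin n × Bool) : Fin n → ℝ := sgn a.2 • ee n a.1

lemma signedUnit_true (i : Fin n) : signedUnit (i, true) = ee n i := by
  simp [signedUnit, sgn]

lemma signedUnit_false (i : Fin n) : signedUnit (i, false) = -ee n i := by
  simp [signedUnit, sgn]

lemma signedUnit_apply (a : Fin n × Bool) (j : Fin n) :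
    signedUnit a j = if j = a.1 then sgn a.2 else 0 := by
  simp [signedUnit, ee]

lemma signedUnit_eq_neg {a c : Fin n × Bool} (h : c.1 = a.1) (hs : c.2 ≠ a.2) :
    signedUnit c = -signedUnit a := by
  obtain ⟨i, s⟩ := a
  obtain ⟨j, t⟩ := c
  obtain rfl : j = i := h
  cases s <;> cases t <;> simp_all [signedUnit_true, signedUnit_false]

lemma dot_signedUnit (a : Fin n × Bool) (x : Fin n → ℝ) :
    dot (signedUnit a) x = sgn a.2 * x a.1 := by
  simp [dot_eq_dotProduct, signedUnit, ee_eq_single]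

lemma eq_signedUnit_or_eq_add_of_mem_Bn {α : Fin n → ℝ} (hα : α ∈ Bn n) :
    (∃ a, α = signedUnit a) ∨
      ∃ a b : Fin n × Bool, a.1 ≠ b.1 ∧ α = signedUnit a + signedUnit b := by
  rcases hα with ⟨i, rfl | rfl⟩ | ⟨i, j, hij, rfl | rfl | rfl | rfl⟩
  · exact Or.inl ⟨(i, true), (signedUnit_true i).symm⟩
  · exact Or.inl ⟨(i, false), (signedUnit_false i).symm⟩
  · exact Or.inr ⟨(i, true), (j, true), hij.ne, by simp only [signedUnit_true]⟩
  · exact Or.inr ⟨(i, false), (j, false), hij.ne, by simp only [signedUnit_false, sub_eq_add_neg]⟩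
  · exact Or.inr ⟨(i, true), (j, false), hij.ne,
      by simp only [signedUnit_true, signedUnit_false, sub_eq_add_neg]⟩
  · exact Or.inr ⟨(i, false), (j, true), hij.ne, by simp only [signedUnit_true, signedUnit_false]⟩

lemma Bn_finite : (Bn n).Finite := by
  let pairSum (p : (Fin n × Bool) × (Fin n × Bool)) := signedUnit p.1 + signedUnit p.2
  refine ((Set.finite_range signedUnit).union (Set.finite_range pairSum)).subset fun α hα => ?_
  rcases eq_signedUnit_or_eq_add_of_mem_Bn hα with ⟨a, rfl⟩ | ⟨a, b, -, rfl⟩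
  · exact Or.inl ⟨a, rfl⟩
  · exact Or.inr ⟨(a, b), rfl⟩

lemma eq_neg_or_eq_sub_of_mem_Bn {α : Fin n → ℝ} (hα : α ∈ Bn n) {a : Fin n × Bool}
    (h0 : α a.1 ≠ 0) (h1 : α a.1 ≠ sgn a.2) :
    α = -signedUnit a ∨ ∃ b, α = signedUnit b - signedUnit a := by
  rcases eq_signedUnit_or_eq_add_of_mem_Bn hα with ⟨c, rfl⟩ | ⟨c, d, hcd, rfl⟩
  · simp only [signedUnit_apply] at h0 h1
    split_ifs at h0 h1 with hc
    · exact Or.inl (signedUnit_eq_neg hc.symm fun h => h1 (h ▸ rfl))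
    · exact absurd rfl h0
  · simp only [Pi.add_apply, signedUnit_apply] at h0 h1
    split_ifs at h0 h1 with hc hd hd
    · exact absurd (hc.symm.trans hd) hcd
    · refine Or.inr ⟨d, ?_⟩
      rw [signedUnit_eq_neg hc.symm fun h => h1 (by rw [h, add_zero])]
      abel
    · refine Or.inr ⟨c, ?_⟩
      rw [signedUnit_eq_neg hd.symm fun h => h1 (by rw [h, zero_add])]
      abel
    · exact absurd (add_zero 0) h0

/-- `b` dominates `a` when `P` contains the relation `x_b ≥ x_a`, where `x_{-i} = -x_i`. -/
def Dominates (P : Set (Fin n → ℝ)) (b a : Fin n × Bool) : Prop :=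
  signedUnit b - signedUnit a ∈ P

lemma exists_sub_mem_PLC_of_transGen {P : Set (Fin n → ℝ)} {b a : Fin n × Bool}
    (h : Relation.TransGen (Dominates P) b a) :
    ∃ α ∈ P, signedUnit b - signedUnit a - α ∈ PLC P := by
  induction h with
  | single h => exact ⟨_, h, by simpa using zero_mem_PLC P⟩
  | @tail c a _ hca ih =>
    obtain ⟨α, hα, hbc⟩ := ih
    refine ⟨α, hα, ?_⟩
    convert add_mem_PLC hbc (subset_PLC P hca) using 1
    abel

/- A dominance cycle would sum to a positive combination equal to `0`. -/
lemma wellFounded_dominates {P : Set (Fin n → ℝ)} (hP : IsSignedPoset P) :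
    WellFounded (Dominates P) := by
  have : Std.Irrefl (Relation.TransGen (Dominates P)) := ⟨fun a ha => by
    obtain ⟨α, hα, h⟩ := exists_sub_mem_PLC_of_transGen ha
    exact neg_notMem_PLC hP hα (by simpa using h)⟩
  exact Subrelation.wf Relation.TransGen.single (Finite.wellFounded_of_trans_of_irrefl _)

/-- `(i, true)` is maximal iff `PMax P i`, and `(i, false)` iff `NMax P i`. -/
def IsSignedMax (P : Set (Fin n → ℝ)) (a : Fin n × Bool) : Prop :=
  ∀ α ∈ P, α a.1 ≠ 0 → α a.1 = sgn a.2

/- Walk up from `a` through dominating indices until reaching a maximal one. -/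
lemma dot_signedUnit_le_one {P : Set (Fin n → ℝ)} (hP : IsSignedPoset P) {x : Fin n → ℝ}
    (hx : ∀ α ∈ P, 0 ≤ dot α x) (hmax : ∀ a, IsSignedMax P a → dot (signedUnit a) x ≤ 1)
    (a : Fin n × Bool) : dot (signedUnit a) x ≤ 1 := by
  induction a using (wellFounded_dominates hP).induction with
  | _ a ih =>
  by_cases ha : IsSignedMax P a
  · exact hmax a ha
  obtain ⟨α, hαP, h0, h1⟩ : ∃ α ∈ P, α a.1 ≠ 0 ∧ α a.1 ≠ sgn a.2 := by
    simpa [IsSignedMax] using ha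
  have hαx := hx α hαP
  rcases eq_neg_or_eq_sub_of_mem_Bn (hP.1 hαP) h0 h1 with rfl | ⟨b, rfl⟩
  · simp only [dot_eq_dotProduct, neg_dotProduct] at hαx ⊢
    linarith
  · have hb := ih b hαP
    simp only [dot_eq_dotProduct, sub_dotProduct] at hαx hb ⊢
    linarith

lemma polyOf_eq_orderPolytope {P M : Set (Fin n → ℝ)} (hP : IsSignedPoset P)
    (hM : IsMinrep P M) : polyOf M {i | PMax P i} {i | NMax P i} = orderPolytope P := by
  ext x
  constructor
  · rintro ⟨hxM, hxp, hxn⟩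
    have hxP : ∀ α ∈ P, 0 ≤ dot α x := fun α hα => dot_nonneg_of_mem_PLC (hM.1.2 α hα) hxM
    have hbox := dot_signedUnit_le_one hP hxP fun
      | (i, true), h => by simpa [dot_signedUnit, sgn] using hxp i h
      | (i, false), h => by simpa [dot_signedUnit, sgn, neg_le] using hxn i h
    refine ⟨hxP, fun i => ⟨?_, ?_⟩⟩
    · simpa [dot_signedUnit, sgn, neg_le] using hbox (i, false)
    · simpa [dot_signedUnit, sgn] using hbox (i, true)
  · rintro ⟨hxP, hbox⟩
    exact ⟨fun α hα => hxP α (hM.1.1 hα), fun i _ => (hbox i).2, fun i _ => (hbox i).1⟩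

lemma notMem_PLC_diff_of_isMinrep {P M : Set (Fin n → ℝ)} (hM : IsMinrep P M)
    {α₀ : Fin n → ℝ} (hα₀ : α₀ ∈ M) : α₀ ∉ PLC (M \ {α₀}) := by
  intro h
  have hM_sub : M ⊆ PLC (M \ {α₀}) := fun γ hγ => by
    by_cases hγα₀ : γ = α₀
    · exact hγα₀ ▸ h
    · exact subset_PLC _ ⟨hγ, hγα₀⟩
  have hgen : GenBy (M \ {α₀}) P :=
    ⟨Set.sdiff_subset.trans hM.1.1, fun β hβ => PLC_subset_PLC hM_sub (hM.1.2 β hβ)⟩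
  exact (hM.2 _ hgen hα₀).2 rfl

lemma abs_smul_apply_le_one (y : Fin n → ℝ) (i : Fin n) : |((‖y‖ + 1)⁻¹ • y) i| ≤ 1 := by
  rw [Pi.smul_apply, smul_eq_mul, abs_mul, abs_inv, abs_of_pos (by positivity),
    inv_mul_le_one₀ (by positivity)]
  linarith [norm_le_pi_norm y i, Real.norm_eq_abs (y i)]

lemma polyOf_diff_ne_of_mem_minrep {P M : Set (Fin n → ℝ)} (hP : IsSignedPoset P)
    (hM : IsMinrep P M) {α₀ : Fin n → ℝ} (hα₀ : α₀ ∈ M) (Sp Sn : Set (Fin n)) :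
    polyOf (M \ {α₀}) Sp Sn ≠ orderPolytope P := by
  have hfin : (M \ {α₀}).Finite := Bn_finite.subset fun α hα => hP.1 (hM.1.1 hα.1)
  obtain ⟨y, hy, hyα₀⟩ :=
    exists_dot_separating_of_notMem_PLC hfin (notMem_PLC_diff_of_isMinrep hM hα₀)
  set x := (‖y‖ + 1)⁻¹ • y
  have hdot : ∀ α, dot α x = (‖y‖ + 1)⁻¹ * dot α y := fun α => dotProduct_smul _ _ _
  have hbox : ∀ i, -1 ≤ x i ∧ x i ≤ 1 := fun i => abs_le.1 (abs_smul_apply_le_one y i)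
  have hx : x ∈ polyOf (M \ {α₀}) Sp Sn :=
    ⟨fun α hα => hdot α ▸ mul_nonneg (by positivity) (hy α hα), fun i _ => (hbox i).2,
      fun i _ => (hbox i).1⟩
  intro heq
  have := (heq ▸ hx).1 α₀ (hM.1.1 hα₀)
  rw [hdot] at this
  nlinarith [inv_pos.2 (by positivity : (0 : ℝ) < ‖y‖ + 1)]

lemma polyOf_diff_ne_of_PMax {P M : Set (Fin n → ℝ)} (hMP : M ⊆ P) {i₀ : Fin n}
    (hi₀ : PMax P i₀) (Sp Sn : Set (Fin n)) : polyOf M (Sp \ {i₀}) Sn ≠ orderPolytope P := by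
  intro heq
  have hx : Pi.single i₀ 2 ∈ polyOf M (Sp \ {i₀}) Sn := by
    refine ⟨fun α hα => ?_, fun i hi => ?_, fun i _ => ?_⟩
    · rw [dot_eq_dotProduct, dotProduct_single]
      by_cases h : α i₀ = 0
      · simp [h]
      · simp [hi₀ α (hMP hα) h]
    · simp [show i ≠ i₀ from hi.2]
    · by_cases h : i = i₀ <;> norm_num [h]
  have := ((heq ▸ hx).2 i₀).2
  norm_num at this

lemma polyOf_diff_ne_of_NMax {P M : Set (Fin n → ℝ)} (hMP : M ⊆ P) {i₀ : Fin n}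
    (hi₀ : NMax P i₀) (Sp Sn : Set (Fin n)) : polyOf M Sp (Sn \ {i₀}) ≠ orderPolytope P := by
  intro heq
  have hx : Pi.single i₀ (-2) ∈ polyOf M Sp (Sn \ {i₀}) := by
    refine ⟨fun α hα => ?_, fun i _ => ?_, fun i hi => ?_⟩
    · rw [dot_eq_dotProduct, dotProduct_single]
      by_cases h : α i₀ = 0
      · simp [h]
      · simp [hi₀ α (hMP hα) h]
    · by_cases h : i = i₀ <;> norm_num [h]
    · simp [show i ≠ i₀ from hi.2]
  have := ((heq ▸ hx).2 i₀).1
  norm_num at this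

end SignedPoset

/-- the inequalities `⟨α,x⟩ ≥ 0` for `α ∈ minrep(P)`, `x_i ≤ 1` for
positive maximal `i`, `x_i ≥ -1` for negative maximal `i` give an irredundant
description of `O_P`. -/
theorem stmt7 {n : ℕ} (P M : Set (Fin n → ℝ)) (hP : IsSignedPoset P)
    (hM : IsMinrep P M) :
    polyOf M {i | PMax P i} {i | NMax P i} = orderPolytope P ∧
    (∀ α₀ ∈ M, polyOf (M \ {α₀}) {i | PMax P i} {i | NMax P i} ≠ orderPolytope P) ∧
    (∀ i₀, PMax P i₀ →
      polyOf M ({i | PMax P i} \ {i₀}) {i | NMax P i} ≠ orderPolytope P) ∧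
    (∀ i₀, NMax P i₀ →
      polyOf M {i | PMax P i} ({i | NMax P i} \ {i₀}) ≠ orderPolytope P) :=
  ⟨SignedPoset.polyOf_eq_orderPolytope hP hM,
    fun _ hα₀ => SignedPoset.polyOf_diff_ne_of_mem_minrep hP hM hα₀ _ _,
    fun _ hi₀ => SignedPoset.polyOf_diff_ne_of_PMax hM.1.1 hi₀ _ _,
    fun _ hi₀ => SignedPoset.polyOf_diff_ne_of_NMax hM.1.1 hi₀ _ _⟩
end
end

section
/- For a signed poset P on [n], if i ∈ [n] is a positive maximal element of P, then the inequality x_i ≤ 1 cannot be omitted from the description of O_P: no combination of the inequalities ⟨α, x⟩ ≥ 0 for α ∈ P implies x_i ≤ 1, since all relations of P adjacent to i have positive e_i-coefficient. -/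
open Finset Pointwise

noncomputable section
attribute [local instance] Classical.propDecidable

lemma dot_smul_ee {n : ℕ} (a : Fin n → ℝ) (t : ℝ) (i : Fin n) :
    dot a (t • ee n i) = t * a i := by
  simp [dot, ee, mul_comm]

lemma smul_ee_mem_orderCone {n : ℕ} {P : Set (Fin n → ℝ)} {i : Fin n}
    (hi : ∀ α ∈ P, 0 ≤ α i) {t : ℝ} (ht : 0 ≤ t) : t • ee n i ∈ orderCone P :=
  fun α hα => by rw [dot_smul_ee]; exact mul_nonneg ht (hi α hα)

theorem stmt8_general {n : ℕ} (P : Set (Fin n → ℝ)) (i : Fin n)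
    (hi : ∀ α ∈ P, α i ≠ 0 → α i = 1) :
    ∃ x : Fin n → ℝ, (∀ α ∈ P, 0 ≤ dot α x) ∧
      (∀ j : Fin n, j ≠ i → -1 ≤ x j ∧ x j ≤ 1) ∧ 1 < x i := by
  have hi_nonneg : ∀ α ∈ P, 0 ≤ α i := fun α hα => by
    by_cases h : α i = 0
    · exact h.ge
    · rw [hi α hα h]; exact zero_le_one
  refine ⟨(2 : ℝ) • ee n i, smul_ee_mem_orderCone hi_nonneg zero_le_two, fun j hj => ?_, ?_⟩
  · simp [ee, hj]
  · norm_num [ee]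

/-- if `i` is a positive maximal element, the inequality `x_i ≤ 1`
cannot be omitted from the description of `O_P`. -/
theorem stmt8 {n : ℕ} (P : Set (Fin n → ℝ)) (hP : IsSignedPoset P) (i : Fin n)
    (hi : ∀ α ∈ P, α i ≠ 0 → α i = 1) :
    ∃ x : Fin n → ℝ, (∀ α ∈ P, 0 ≤ dot α x) ∧
      (∀ j : Fin n, j ≠ i → -1 ≤ x j ∧ x j ≤ 1) ∧ 1 < x i :=
  stmt8_general P i hi
end
end

section
/- Let P be a signed poset on [n] and let F be the set of signed filters of P, i.e., points x ∈ {-1,0,1}^n with ⟨α, x⟩ ≥ 0 for all α ∈ P. Then the signed order polytope O_P equals the convex hull of F. -/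
open Finset Pointwise

noncomputable section
attribute [local instance] Classical.propDecidable

/-!
Induct on the number of distinct values of `|xᵢ|`. If `x ∈ O_P` is not in `{-1,0,1}ⁿ`, let
`a ∈ (0,1)` be the largest value of `|xᵢ|` below `1`; then `x = (1 - a) • u + a • w`, where `u`
keeps the coordinates with `|xᵢ| = 1` and zeroes the others, and `w` is `x / a` clamped to
`[-1,1]`. Both are images of `x` under odd monotone maps of `ℝ`, and such maps preserve each
inequality `⟨α, x⟩ ≥ 0` with `α ∈ B_n`, since it says `s ≤ t` for some `s, t ∈ {0, ±xᵢ}`. So `u` is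
a signed filter, `w ∈ O_P`, and `w` has fewer distinct `|wᵢ|`, as the levels `a` and `1` merge.
-/

section

variable {n : ℕ}

lemma dot_eq_dotProduct (a x : Fin n → ℝ) : dot a x = a ⬝ᵥ x := rfl

lemma ee_eq_single (i : Fin n) : ee n i = Pi.single i 1 := by
  ext j
  simp [ee, Pi.single_apply]

lemma dot_comp_nonneg_of_mem_Bn {g : ℝ → ℝ} (hg : Monotone g) (hodd : ∀ v, g (-v) = -g v)
    {α x : Fin n → ℝ} (hα : α ∈ Bn n) (hx : 0 ≤ dot α x) : 0 ≤ dot α (g ∘ x) := by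
  have hg0 : g 0 = 0 := by
    have := hodd 0
    rw [neg_zero] at this
    linarith
  rcases hα with ⟨i, rfl | rfl⟩ | ⟨i, j, -, rfl | rfl | rfl | rfl⟩ <;>
    simp only [dot_eq_dotProduct, ee_eq_single, add_dotProduct, sub_dotProduct, neg_dotProduct,
      single_dotProduct, one_mul, Function.comp_apply] at hx ⊢
  · linarith [hg hx]
  · linarith [hg (show x i ≤ 0 by linarith)]
  · linarith [hg (show -x j ≤ x i by linarith), hodd (x j)]
  · linarith [hg (show x i ≤ -x j by linarith), hodd (x j)]
  · linarith [hg (show x j ≤ x i by linarith)]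
  · linarith [hg (show x i ≤ x j by linarith)]

lemma comp_mem_orderCone {P : Set (Fin n → ℝ)} (hPB : P ⊆ Bn n) {g : ℝ → ℝ} (hg : Monotone g)
    (hodd : ∀ v, g (-v) = -g v) {x : Fin n → ℝ} (hx : x ∈ orderCone P) :
    g ∘ x ∈ orderCone P :=
  fun α hα => dot_comp_nonneg_of_mem_Bn hg hodd (hPB hα) (hx α hα)

def signedFilters (P : Set (Fin n → ℝ)) : Set (Fin n → ℝ) :=
  {x | (∀ i, x i = -1 ∨ x i = 0 ∨ x i = 1) ∧ ∀ α ∈ P, 0 ≤ dot α x}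

lemma convex_orderPolytope (P : Set (Fin n → ℝ)) : Convex ℝ (orderPolytope P) := by
  intro y hy z hz a b ha hb hab
  refine ⟨fun α hα => ?_, fun i => ?_⟩
  · simp only [dot_eq_dotProduct, dotProduct_add, dotProduct_smul, smul_eq_mul]
    exact add_nonneg (mul_nonneg ha (hy.1 α hα)) (mul_nonneg hb (hz.1 α hα))
  · exact convex_Icc (-1 : ℝ) 1 (hy.2 i) (hz.2 i) ha hb hab

lemma signedFilters_subset_orderPolytope (P : Set (Fin n → ℝ)) :
    signedFilters P ⊆ orderPolytope P := by
  rintro x ⟨hx, hxP⟩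
  refine ⟨hxP, fun i => ?_⟩
  rcases hx i with h | h | h <;> rw [h] <;> norm_num

def unitPart (v : ℝ) : ℝ := if 1 ≤ v then 1 else if v ≤ -1 then -1 else 0

lemma monotone_unitPart : Monotone unitPart := by
  intro u v huv
  unfold unitPart
  split_ifs <;> linarith

lemma unitPart_neg (v : ℝ) : unitPart (-v) = -unitPart v := by
  unfold unitPart
  split_ifs <;> first | (exfalso; linarith) | norm_num

lemma unitPart_mem (v : ℝ) : unitPart v = -1 ∨ unitPart v = 0 ∨ unitPart v = 1 := by
  unfold unitPart
  split_ifs <;> simp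

def clampUnit (v : ℝ) : ℝ := max (-1) (min 1 v)

lemma monotone_clampUnit : Monotone clampUnit :=
  monotone_const.max (monotone_const.min monotone_id)

lemma clampUnit_neg (v : ℝ) : clampUnit (-v) = -clampUnit v := by
  simp only [clampUnit, max_def, min_def]
  split_ifs <;> linarith

lemma clampUnit_mem_Icc (v : ℝ) : -1 ≤ clampUnit v ∧ clampUnit v ≤ 1 :=
  ⟨le_max_left _ _, max_le (by norm_num) (min_le_left _ _)⟩

lemma abs_clampUnit (v : ℝ) : |clampUnit v| = min 1 |v| := by
  simp only [clampUnit, max_def, min_def, abs_eq_max_neg]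
  split_ifs <;> linarith

lemma eq_unitPart_add_clampUnit {a v : ℝ} (ha0 : 0 < a) (ha1 : a < 1) (hv : |v| ≤ a ∨ |v| = 1) :
    v = (1 - a) * unitPart v + a * clampUnit (v / a) := by
  have h1a : 1 ≤ 1 / a := by rw [le_div_iff₀ ha0]; linarith
  rcases hv with hv | hv
  · rw [abs_le] at hv
    have hu : unitPart v = 0 := by unfold unitPart; split_ifs <;> linarith
    have hc : clampUnit (v / a) = v / a := by
      rw [clampUnit, min_eq_right ((div_le_one ha0).2 hv.2), max_eq_right]
      rw [le_div_iff₀ ha0]; linarith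
    rw [hu, hc]; field_simp; ring
  · have hu1 : unitPart 1 = 1 := by norm_num [unitPart]
    have hc1 : clampUnit (1 / a) = 1 := by
      rw [clampUnit, min_eq_left h1a, max_eq_right (by norm_num)]
    rcases abs_eq zero_le_one |>.1 hv with rfl | rfl
    · rw [hu1, hc1]; ring
    · rw [neg_div, clampUnit_neg, unitPart_neg, hu1, hc1]; ring

def absLevels (x : Fin n → ℝ) : Finset ℝ :=
  insert 0 (insert 1 (univ.image fun i => |x i|))

lemma abs_mem_absLevels (x : Fin n → ℝ) (i : Fin n) : |x i| ∈ absLevels x :=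
  mem_insert_of_mem (mem_insert_of_mem (mem_image_of_mem _ (mem_univ i)))

lemma exists_top_absLevel {x : Fin n → ℝ} (hx : ∀ i, |x i| ≤ 1) {i₀ : Fin n}
    (h0 : 0 < |x i₀|) (h1 : |x i₀| < 1) :
    ∃ a ∈ absLevels x, 0 < a ∧ a < 1 ∧ ∀ i, |x i| ≤ a ∨ |x i| = 1 := by
  have hne : ((absLevels x).filter (· < 1)).Nonempty :=
    ⟨0, mem_filter.2 ⟨mem_insert_self _ _, zero_lt_one⟩⟩
  have hle : ∀ i, |x i| < 1 → |x i| ≤ ((absLevels x).filter (· < 1)).max' hne :=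
    fun i hi => le_max' _ _ (mem_filter.2 ⟨abs_mem_absLevels x i, hi⟩)
  obtain ⟨ha, ha1⟩ := mem_filter.1 (max'_mem _ hne)
  refine ⟨_, ha, h0.trans_le (hle i₀ h1), ha1, fun i => ?_⟩
  rcases (hx i).lt_or_eq with h | h
  · exact Or.inl (hle i h)
  · exact Or.inr h

lemma card_absLevels_clampUnit_lt {x : Fin n → ℝ} {a : ℝ} (ha : a ∈ absLevels x) (ha0 : 0 < a)
    (ha1 : a < 1) : (absLevels fun i => clampUnit (x i / a)).card < (absLevels x).card := by
  let φ : ℝ → ℝ := fun v => min 1 (v / a)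
  have hsub : absLevels (fun i => clampUnit (x i / a)) ⊆ (absLevels x).image φ := by
    have h1 : φ 1 = 1 := min_eq_left (by rw [le_div_iff₀ ha0]; linarith)
    intro v hv
    simp only [absLevels, mem_insert, mem_image, mem_univ, true_and] at hv
    rcases hv with rfl | rfl | ⟨i, rfl⟩
    · exact mem_image.2 ⟨0, mem_insert_self _ _, by simp [φ]⟩
    · exact mem_image.2 ⟨1, mem_insert_of_mem (mem_insert_self _ _), h1⟩
    · refine mem_image.2 ⟨|x i|, abs_mem_absLevels x i, ?_⟩
      rw [abs_clampUnit, abs_div, abs_of_pos ha0]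
  have hφa : φ a = φ 1 := by
    simp only [φ, div_self ha0.ne', min_self]
    exact (min_eq_left (by rw [le_div_iff₀ ha0]; linarith)).symm
  have hnotinj : ¬ Set.InjOn φ (absLevels x) := fun hinj =>
    ha1.ne (hinj ha (mem_insert_of_mem (mem_insert_self _ _)) hφa)
  exact (card_le_card hsub).trans_lt
    (card_image_le.lt_of_ne fun h => hnotinj (injOn_of_card_image_eq h))

theorem orderPolytope_subset_convexHull {P : Set (Fin n → ℝ)} (hPB : P ⊆ Bn n) :
    orderPolytope P ⊆ convexHull ℝ (signedFilters P) := by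
  intro x hx
  induction hN : (absLevels x).card using Nat.strong_induction_on generalizing x with
  | _ N ih =>
  by_cases hF : ∀ i, x i = -1 ∨ x i = 0 ∨ x i = 1
  · exact subset_convexHull ℝ _ ⟨hF, hx.1⟩
  push Not at hF
  obtain ⟨i₀, hm1, h0, h1⟩ := hF
  have hbox : ∀ i, |x i| ≤ 1 := fun i => abs_le.2 (hx.2 i)
  have hlt : |x i₀| < 1 := (hbox i₀).lt_of_ne fun h => by
    rcases abs_eq zero_le_one |>.1 h with h | h <;> contradiction
  obtain ⟨a, ha, ha0, ha1, hlevels⟩ := exists_top_absLevel hbox (abs_pos.2 h0) hlt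
  have hu : unitPart ∘ x ∈ signedFilters P :=
    ⟨fun i => unitPart_mem (x i), comp_mem_orderCone hPB monotone_unitPart unitPart_neg hx.1⟩
  have hw : (fun i => clampUnit (x i / a)) ∈ orderPolytope P :=
    ⟨comp_mem_orderCone hPB (monotone_clampUnit.comp (monotone_id.div_const ha0.le))
      (fun v => by simp only [Function.comp_apply, id, neg_div, clampUnit_neg]) hx.1,
     fun i => clampUnit_mem_Icc _⟩
  have hw' := ih _ (hN ▸ card_absLevels_clampUnit_lt ha ha0 ha1) hw rfl
  have hdecomp : x = (1 - a) • (unitPart ∘ x) + a • fun i => clampUnit (x i / a) :=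
    funext fun i => eq_unitPart_add_clampUnit ha0 ha1 (hlevels i)
  rw [hdecomp]
  exact convex_convexHull ℝ _ (subset_convexHull ℝ _ hu) hw' (by linarith) ha0.le (by ring)

end

/-- `O_P` is the convex hull of the signed filters of `P`. -/
theorem stmt9 {n : ℕ} (P : Set (Fin n → ℝ)) (hP : IsSignedPoset P) :
    orderPolytope P =
      convexHull ℝ {x : Fin n → ℝ | (∀ i, x i = -1 ∨ x i = 0 ∨ x i = 1) ∧
        ∀ α ∈ P, 0 ≤ dot α x} :=
  (orderPolytope_subset_convexHull hP.1).antisymm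
    (convexHull_min (signedFilters_subset_orderPolytope P) (convex_orderPolytope P))
end
end

section
/- Let σ = (π, ε) ∈ S_n^B and let p = (1/(n+1), 2/(n+1), ..., n/(n+1)). For the simplex Δ_σ = {x : 0 ≤ ε_1 x_{π_1} ≤ ... ≤ ε_n x_{π_n} ≤ 1}, the point p is beyond the facet {ε_i x_{π_i} = ε_{i+1} x_{π_{i+1}}} if and only if σ(i) > σ(i+1), the point p is beyond the facet {ε_1 x_{π_1} = 0} if and only if σ(1) < 0, and p is never beyond the facet {ε_n x_{π_n} = 1}. Consequently, the half-open simplex H_p Δ_σ has exactly natdes(σ) removed facets, where natdes(σ) = |{i ∈ {0,...,n-1} : σ(i) > σ(i+1)}| with the convention σ(0) = 0. -/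
open Finset Pointwise

noncomputable section
attribute [local instance] Classical.propDecidable

/-- A signed permutation on `[n]`, encoded as the underlying permutation `π`
(`π i = |ω(i)|`, zero-indexed) together with the signs (`true` means negative). -/
abbrev SignedPerm (n : ℕ) := Equiv.Perm (Fin n) × (Fin n → Bool)

/-- The sign `ε_i` of a signed permutation. -/
def sgn {n : ℕ} (σ : SignedPerm n) (i : Fin n) : ℝ := if σ.2 i then -1 else 1

/-- The signed permutation `σ` viewed as the point `(σ(1), ..., σ(n)) ∈ ℝ^n`. -/
def spt {n : ℕ} (σ : SignedPerm n) : Fin n → ℝ := fun i => sgn σ i * ((σ.1 i : ℕ) + 1)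

/-- The linear action of a signed permutation on `ℝ^n`, extending
`ω e_i = e_j` if `ω(i) = j` and `ω e_i = -e_j` if `ω(i) = -j`. -/
def sact {n : ℕ} (σ : SignedPerm n) (x : Fin n → ℝ) : Fin n → ℝ :=
  fun j => sgn σ (σ.1.symm j) * x (σ.1.symm j)

/-- The linear action of the inverse signed permutation `σ⁻¹` on `ℝ^n`. -/
def sactInv {n : ℕ} (σ : SignedPerm n) (x : Fin n → ℝ) : Fin n → ℝ :=
  fun i => sgn σ i * x (σ.1 i)

/-- The identity signed permutation. -/
def idSP (n : ℕ) : SignedPerm n := (Equiv.refl (Fin n), fun _ => false)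

/-- The Jordan–Hölder set of a signed poset. -/
def JH {n : ℕ} (P : Set (Fin n → ℝ)) : Set (SignedPerm n) :=
  {σ | ∀ α ∈ P, 0 ≤ dot α (spt σ)}

/-- The value `σ(k)` (as a real number), with the convention `σ(0) = 0`;
here `k` ranges over `0, 1, ..., n`. -/
def svalZ {n : ℕ} (σ : SignedPerm n) : ℕ → ℝ
  | 0 => 0
  | k + 1 => if h : k < n then spt σ ⟨k, h⟩ else 0

/-- The natural descent statistic `natdes(σ) = #{i ∈ {0,...,n-1} : σ(i) > σ(i+1)}`. -/
def natdes {n : ℕ} (σ : SignedPerm n) : ℕ :=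
  ((Finset.range n).filter (fun i => svalZ σ (i + 1) < svalZ σ i)).card

/-- The value `ε_k p_{π_k}` at the point `p = (1/(n+1), ..., n/(n+1))`, with the
convention that the value at `k = 0` is `0`; `k` ranges over `0, 1, ..., n`. -/
def pvalZ {n : ℕ} (σ : SignedPerm n) : ℕ → ℝ
  | 0 => 0
  | k + 1 => if h : k < n then sgn σ ⟨k, h⟩ * (((σ.1 ⟨k, h⟩ : ℕ) + 1 : ℝ) / (n + 1)) else 0

/-! At `p` the facet coordinate `ε_k p_{π_k}` is `σ(k) / (n + 1)`, so each facet inequality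
evaluated at `p` is the corresponding inequality between values of `σ`, and `|σ(k)| ≤ n < n + 1`
keeps `p` below the facet `ε_n x_{π_n} = 1`. -/

theorem abs_spt_le_card {n : ℕ} (σ : SignedPerm n) (i : Fin n) : |spt σ i| ≤ n := by
  have hval : ((σ.1 i : ℕ) : ℝ) + 1 ≤ n := by exact_mod_cast (σ.1 i).isLt
  have habs_sgn : |sgn σ i| = 1 := by unfold sgn; split_ifs <;> simp
  rw [spt, abs_mul, habs_sgn, one_mul, abs_of_nonneg (by positivity)]
  exact hval

theorem svalZ_le_card {n : ℕ} (σ : SignedPerm n) (k : ℕ) : svalZ σ k ≤ n := by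
  cases k with
  | zero => simp [svalZ]
  | succ k =>
    simp only [svalZ]
    split_ifs
    · exact (le_abs_self _).trans (abs_spt_le_card σ _)
    · positivity

theorem pvalZ_eq_svalZ_div {n : ℕ} (σ : SignedPerm n) (k : ℕ) :
    pvalZ σ k = svalZ σ k / (n + 1) := by
  cases k with
  | zero => simp [pvalZ, svalZ]
  | succ k =>
    simp only [pvalZ, svalZ]
    split_ifs
    · rw [spt, mul_div_assoc]
    · rw [zero_div]

theorem pvalZ_lt_pvalZ_iff {n : ℕ} (σ : SignedPerm n) (a b : ℕ) :
    pvalZ σ a < pvalZ σ b ↔ svalZ σ a < svalZ σ b := by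
  rw [pvalZ_eq_svalZ_div, pvalZ_eq_svalZ_div, div_lt_div_iff_of_pos_right (by positivity)]

theorem pvalZ_lt_one {n : ℕ} (σ : SignedPerm n) (k : ℕ) : pvalZ σ k < 1 := by
  rw [pvalZ_eq_svalZ_div, div_lt_one (by positivity)]
  linarith [svalZ_le_card σ k]

/-- `p` is beyond the facet `{ε_k x_{π_k} = ε_{k+1} x_{π_{k+1}}}` iff
`σ(k) > σ(k+1)`; `p` is beyond `{ε_1 x_{π_1} = 0}` iff `σ(1) < 0`; `p` is never beyond
`{ε_n x_{π_n} = 1}`; hence `H_p Δ_σ` has exactly `natdes(σ)` removed facets. -/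
theorem stmt11 {n : ℕ} (σ : SignedPerm n) :
    (∀ k : ℕ, 1 ≤ k → k < n → (pvalZ σ k > pvalZ σ (k + 1) ↔ svalZ σ k > svalZ σ (k + 1))) ∧
    (pvalZ σ 1 < 0 ↔ svalZ σ 1 < 0) ∧
    ¬ (1 < pvalZ σ n) ∧
    ((Finset.range n).filter (fun k => pvalZ σ (k + 1) < pvalZ σ k)).card = natdes σ := by
  refine ⟨fun k _ _ => pvalZ_lt_pvalZ_iff σ _ _, pvalZ_lt_pvalZ_iff σ 1 0,
    (pvalZ_lt_one σ n).not_gt, ?_⟩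
  simp only [natdes, pvalZ_lt_pvalZ_iff]
end
end
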